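/- arXiv:2604.00060 — 2 statements merged into one kernel-verified Lean document; each statement's English description precedes it below -/
import Mathlib

section
/- Let A, B ∈ ℝ^{m×n} satisfy rank(A) = rank(B). Then ‖B⁺ − A⁺‖_F ≤ 3·‖B⁺‖·‖A⁺‖·‖B − A‖_F, where B⁺ and A⁺ denote Moore–Penrose pseudoinverses. In particular, if A = UΣWᵀ is a compact SVD of A, then A⁺ = WΣ^{−1}Uᵀ. -/
open Matrix MeasureTheory ProbabilityTheory
open scoped BigOperators

noncomputable section

/-- Frobenius inner product `⟨A, B⟩ = trace (Aᵀ * B)`. -/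
def frobInner {n1 n2 : ℕ} (A B : Matrix (Fin n1) (Fin n2) ℝ) : ℝ :=
  Matrix.trace (Aᵀ * B)

/-- Frobenius norm of a matrix. -/
def frobNorm {n1 n2 : ℕ} (A : Matrix (Fin n1) (Fin n2) ℝ) : ℝ :=
  Real.sqrt (∑ i, ∑ j, A i j ^ 2)

/-- Spectral (ℓ²-operator) norm of a matrix. -/
def specNorm {n1 n2 : ℕ} (A : Matrix (Fin n1) (Fin n2) ℝ) : ℝ :=
  ‖LinearMap.toContinuousLinearMap (Matrix.toEuclideanLin A)‖

/-- Euclidean norm of a vector in ℝ^m. -/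
def vecNorm {m : ℕ} (v : Fin m → ℝ) : ℝ :=
  Real.sqrt (∑ i, v i ^ 2)

/-- Smallest nonzero singular value of a matrix: the singular values of `X` are the
square roots of the eigenvalues of `Xᴴ * X`. -/
def sigmaMin {n1 n2 : ℕ} (X : Matrix (Fin n1) (Fin n2) ℝ) : ℝ :=
  sInf {s : ℝ | 0 < s ∧ ∃ i : Fin n2,
    s ^ 2 = (Matrix.isHermitian_conjTranspose_mul_self X).eigenvalues i}

/-- The measurement operator `𝒜(X) i = (1/√m) ⟨A i, X⟩`. -/
def measOp {n1 n2 m : ℕ} (A : Fin m → Matrix (Fin n1) (Fin n2) ℝ)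
    (X : Matrix (Fin n1) (Fin n2) ℝ) : Fin m → ℝ :=
  fun i => (Real.sqrt m)⁻¹ * frobInner (A i) X

/-- The adjoint `𝒜*(u) = (1/√m) ∑ i, u i • A i`. -/
def measAdj {n1 n2 m : ℕ} (A : Fin m → Matrix (Fin n1) (Fin n2) ℝ)
    (u : Fin m → ℝ) : Matrix (Fin n1) (Fin n2) ℝ :=
  (Real.sqrt m)⁻¹ • ∑ i, u i • A i

/-- The composite operator `𝒜*𝒜`. -/
def opAA {n1 n2 m : ℕ} (A : Fin m → Matrix (Fin n1) (Fin n2) ℝ)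
    (X : Matrix (Fin n1) (Fin n2) ℝ) : Matrix (Fin n1) (Fin n2) ℝ :=
  measAdj A (measOp A X)

/-- Rank-`k` restricted isometry property with constant `δ`. -/
def HasRIP {n1 n2 m : ℕ} (A : Fin m → Matrix (Fin n1) (Fin n2) ℝ) (k : ℕ) (δ : ℝ) : Prop :=
  ∀ Z : Matrix (Fin n1) (Fin n2) ℝ, Z.rank ≤ k →
    (1 - δ) * frobNorm Z ^ 2 ≤ vecNorm (measOp A Z) ^ 2 ∧
      vecNorm (measOp A Z) ^ 2 ≤ (1 + δ) * frobNorm Z ^ 2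

/-- Compact SVD: `X = V * S * Wᵀ`, `V, W` with orthonormal columns, `S` diagonal with
positive diagonal entries. -/
def IsCompactSVD {n1 n2 r : ℕ} (X : Matrix (Fin n1) (Fin n2) ℝ)
    (V : Matrix (Fin n1) (Fin r) ℝ) (S : Matrix (Fin r) (Fin r) ℝ)
    (W : Matrix (Fin n2) (Fin r) ℝ) : Prop :=
  X = V * S * Wᵀ ∧ Vᵀ * V = 1 ∧ Wᵀ * W = 1 ∧
    (∀ i j, i ≠ j → S i j = 0) ∧ (∀ i, 0 < S i i)

/-- `Vp` is a matrix whose columns form an orthonormal basis of the orthogonal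
complement of the column space of `V` (which has orthonormal columns). -/
def IsOrthComplement {n r : ℕ} (V : Matrix (Fin n) (Fin r) ℝ)
    (Vp : Matrix (Fin n) (Fin (n - r)) ℝ) : Prop :=
  Vpᵀ * Vp = 1 ∧ Vᵀ * Vp = 0

end
noncomputable section

/-- `B` is the Moore–Penrose pseudoinverse of `A`. -/
def IsMoorePenrose {p q : ℕ} (A : Matrix (Fin p) (Fin q) ℝ)
    (B : Matrix (Fin q) (Fin p) ℝ) : Prop :=
  A * B * A = A ∧ B * A * B = B ∧ (A * B)ᵀ = A * B ∧ (B * A)ᵀ = B * A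

end

/-! Wedin's argument. With `E = B - A`,
`B⁺ - A⁺ = -B⁺ E A⁺ + B⁺ (I - A A⁺) - (I - B⁺ B) A⁺`,
and each term has Frobenius norm at most `‖B⁺‖ ‖A⁺‖ ‖E‖_F`. For the middle term write
`B⁺ (I - A A⁺) = B⁺ (B B⁺) (I - A A⁺)`: the orthogonal projections `B B⁺` and `A A⁺` have the
same trace (their common rank), which forces `‖B B⁺ (I - A A⁺)‖_F = ‖(I - B B⁺) A A⁺‖_F`, and
`(I - B B⁺) A = -(I - B B⁺) E`. The last term is the middle one for the transposed pair
`(Bᵀ, Aᵀ)`. The compact-SVD formula is a direct check of the four Penrose equations. -/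

theorem Matrix.trace_eq_rank_of_isIdempotentElem {K n : Type*} [Field K] [Fintype n]
    [DecidableEq n] {P : Matrix n n K} (hP : IsIdempotentElem P) :
    P.trace = P.rank := by
  have hP' : IsIdempotentElem (Matrix.toLin' P) := hP.map Matrix.toLinAlgEquiv'
  rw [Matrix.rank, ← Matrix.trace_toLin'_eq, ← Matrix.toLin'_apply',
    ((LinearMap.isProj_range_iff_isIdempotentElem _).2 hP').trace]

section MatrixNorms

open scoped Matrix.Norms.Frobenius

variable {m n l : ℕ}

theorem frobNorm_eq_norm (A : Matrix (Fin m) (Fin n) ℝ) : frobNorm A = ‖A‖ := by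
  rw [frobNorm, frobenius_norm_def, Real.sqrt_eq_rpow]
  simp [Real.norm_eq_abs, sq_abs]

theorem frobNorm_nonneg (A : Matrix (Fin m) (Fin n) ℝ) : 0 ≤ frobNorm A :=
  Real.sqrt_nonneg _

theorem frobNorm_add_le (A B : Matrix (Fin m) (Fin n) ℝ) :
    frobNorm (A + B) ≤ frobNorm A + frobNorm B := by
  simpa only [frobNorm_eq_norm] using norm_add_le A B

theorem frobNorm_sub_le (A B : Matrix (Fin m) (Fin n) ℝ) :
    frobNorm (A - B) ≤ frobNorm A + frobNorm B := by
  simpa only [frobNorm_eq_norm] using norm_sub_le A B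

theorem frobNorm_neg (A : Matrix (Fin m) (Fin n) ℝ) : frobNorm (-A) = frobNorm A := by
  simp only [frobNorm_eq_norm, norm_neg]

theorem frobNorm_sub_comm (A B : Matrix (Fin m) (Fin n) ℝ) :
    frobNorm (A - B) = frobNorm (B - A) := by
  rw [← neg_sub, frobNorm_neg]

theorem frobNorm_transpose (A : Matrix (Fin m) (Fin n) ℝ) : frobNorm Aᵀ = frobNorm A := by
  simp only [frobNorm_eq_norm, frobenius_norm_transpose]

theorem frobNorm_sq_eq_trace (A : Matrix (Fin m) (Fin n) ℝ) :
    frobNorm A ^ 2 = (Aᵀ * A).trace := by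
  rw [frobNorm, Real.sq_sqrt (by positivity), Finset.sum_comm]
  simp [Matrix.trace, Matrix.mul_apply, sq]

theorem frobNorm_sq_eq_sum_col (A : Matrix (Fin m) (Fin n) ℝ) :
    frobNorm A ^ 2 = ∑ j, ‖(WithLp.toLp 2 (Aᵀ j) : EuclideanSpace ℝ (Fin m))‖ ^ 2 := by
  rw [frobNorm, Real.sq_sqrt (by positivity), Finset.sum_comm]
  simp [EuclideanSpace.norm_sq_eq, sq_abs]

theorem norm_mulVec_le_specNorm (X : Matrix (Fin m) (Fin n) ℝ) (v : Fin n → ℝ) :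
    ‖(WithLp.toLp 2 (X *ᵥ v) : EuclideanSpace ℝ (Fin m))‖
      ≤ specNorm X * ‖(WithLp.toLp 2 v : EuclideanSpace ℝ (Fin n))‖ :=
  (LinearMap.toContinuousLinearMap (Matrix.toEuclideanLin X)).le_opNorm (WithLp.toLp 2 v)

theorem specNorm_transpose (A : Matrix (Fin m) (Fin n) ℝ) : specNorm Aᵀ = specNorm A := by
  rw [← Matrix.conjTranspose_eq_transpose_of_trivial]
  exact Matrix.l2_opNorm_conjTranspose A

theorem frobNorm_mul_le_specNorm_mul (X : Matrix (Fin m) (Fin n) ℝ)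
    (Y : Matrix (Fin n) (Fin l) ℝ) : frobNorm (X * Y) ≤ specNorm X * frobNorm Y := by
  refine le_of_sq_le_sq ?_ (mul_nonneg (norm_nonneg _) (frobNorm_nonneg Y))
  rw [mul_pow, frobNorm_sq_eq_sum_col, frobNorm_sq_eq_sum_col, Finset.mul_sum]
  refine Finset.sum_le_sum fun j _ => ?_
  have hcol : (X * Y)ᵀ j = X *ᵥ Yᵀ j := by
    ext i
    simp [Matrix.mul_apply, Matrix.mulVec, dotProduct]
  rw [← mul_pow, hcol]
  exact pow_le_pow_left₀ (norm_nonneg _) (norm_mulVec_le_specNorm X _) 2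

theorem frobNorm_mul_le_mul_specNorm (Y : Matrix (Fin m) (Fin n) ℝ)
    (X : Matrix (Fin n) (Fin l) ℝ) : frobNorm (Y * X) ≤ frobNorm Y * specNorm X := by
  rw [← frobNorm_transpose, Matrix.transpose_mul, ← frobNorm_transpose Y, ← specNorm_transpose X,
    mul_comm]
  exact frobNorm_mul_le_specNorm_mul _ _

end MatrixNorms

namespace IsStarProjection

variable {n : ℕ} {P Q : Matrix (Fin n) (Fin n) ℝ}

theorem transpose_eq (hP : IsStarProjection P) : Pᵀ = P := by
  simpa only [Matrix.star_eq_conjTranspose, Matrix.conjTranspose_eq_transpose_of_trivial]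
    using hP.isSelfAdjoint.star_eq

theorem transpose_mul_self_mul {k : ℕ} (hP : IsStarProjection P) (M : Matrix (Fin n) (Fin k) ℝ) :
    (P * M)ᵀ * (P * M) = Mᵀ * (P * M) := by
  rw [Matrix.transpose_mul, hP.transpose_eq, Matrix.mul_assoc, ← Matrix.mul_assoc P P,
    hP.isIdempotentElem.eq]

theorem frobNorm_sq_mul_add_frobNorm_sq_one_sub_mul {k : ℕ} (hP : IsStarProjection P)
    (M : Matrix (Fin n) (Fin k) ℝ) :
    frobNorm (P * M) ^ 2 + frobNorm ((1 - P) * M) ^ 2 = frobNorm M ^ 2 := by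
  simp only [frobNorm_sq_eq_trace, hP.transpose_mul_self_mul, hP.one_sub.transpose_mul_self_mul,
    ← Matrix.trace_add, ← Matrix.mul_add, ← Matrix.add_mul, add_sub_cancel, Matrix.one_mul]

theorem frobNorm_mul_le {k : ℕ} (hP : IsStarProjection P) (M : Matrix (Fin n) (Fin k) ℝ) :
    frobNorm (P * M) ≤ frobNorm M := by
  refine le_of_sq_le_sq ?_ (frobNorm_nonneg M)
  linarith [hP.frobNorm_sq_mul_add_frobNorm_sq_one_sub_mul M, sq_nonneg (frobNorm ((1 - P) * M))]

theorem frobNorm_mul_one_sub_eq (hP : IsStarProjection P) (hQ : IsStarProjection Q)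
    (htr : P.trace = Q.trace) : frobNorm (P * (1 - Q)) = frobNorm ((1 - P) * Q) := by
  -- By Pythagoras the two squares are `tr P - ‖P Q‖²` and `tr Q - ‖P Q‖²`.
  have hPQ : frobNorm (Q * P) = frobNorm (P * Q) := by
    rw [← frobNorm_transpose, Matrix.transpose_mul, hP.transpose_eq, hQ.transpose_eq]
  have hP1 : frobNorm (P * (1 - Q)) = frobNorm ((1 - Q) * P) := by
    rw [← frobNorm_transpose, Matrix.transpose_mul, hP.transpose_eq, hQ.one_sub.transpose_eq]
  have hnP : frobNorm P ^ 2 = P.trace := by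
    rw [frobNorm_sq_eq_trace, hP.transpose_eq, hP.isIdempotentElem.eq]
  have hnQ : frobNorm Q ^ 2 = Q.trace := by
    rw [frobNorm_sq_eq_trace, hQ.transpose_eq, hQ.isIdempotentElem.eq]
  have hsplitP := hQ.frobNorm_sq_mul_add_frobNorm_sq_one_sub_mul P
  have hsplitQ := hP.frobNorm_sq_mul_add_frobNorm_sq_one_sub_mul Q
  rw [hPQ] at hsplitP
  rw [hP1]
  refine (sq_eq_sq₀ (frobNorm_nonneg _) (frobNorm_nonneg _)).1 ?_
  linarith

end IsStarProjection

namespace IsMoorePenrose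

variable {p q : ℕ} {A B : Matrix (Fin p) (Fin q) ℝ} {Ap Bp : Matrix (Fin q) (Fin p) ℝ}

theorem transpose (hA : IsMoorePenrose A Ap) : IsMoorePenrose Aᵀ Apᵀ := by
  obtain ⟨h1, h2, h3, h4⟩ := hA
  refine ⟨?_, ?_, ?_, ?_⟩
  · rw [← Matrix.transpose_mul, ← Matrix.transpose_mul, ← Matrix.mul_assoc, h1]
  · rw [← Matrix.transpose_mul, ← Matrix.transpose_mul, ← Matrix.mul_assoc, h2]
  · rw [← Matrix.transpose_mul, h4, h4]
  · rw [← Matrix.transpose_mul, h3, h3]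

theorem isStarProjection_mul_pinv (hA : IsMoorePenrose A Ap) : IsStarProjection (A * Ap) := by
  refine ⟨?_, ?_⟩
  · rw [IsIdempotentElem, ← Matrix.mul_assoc, hA.1]
  · rw [IsSelfAdjoint, Matrix.star_eq_conjTranspose, Matrix.conjTranspose_eq_transpose_of_trivial,
      hA.2.2.1]

theorem trace_mul_pinv (hA : IsMoorePenrose A Ap) : (A * Ap).trace = A.rank := by
  rw [Matrix.trace_eq_rank_of_isIdempotentElem hA.isStarProjection_mul_pinv.isIdempotentElem]
  refine congrArg Nat.cast (le_antisymm (Matrix.rank_mul_le_left A Ap) ?_)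
  conv_lhs => rw [← hA.1]
  exact Matrix.rank_mul_le_left _ _

theorem frobNorm_pinv_mul_one_sub_le (hA : IsMoorePenrose A Ap) (hB : IsMoorePenrose B Bp)
    (hrank : A.rank = B.rank) :
    frobNorm (Bp * (1 - A * Ap)) ≤ specNorm Bp * frobNorm (B - A) * specNorm Ap := by
  have hswap : frobNorm (B * Bp * (1 - A * Ap)) = frobNorm ((1 - B * Bp) * (A * Ap)) :=
    hB.isStarProjection_mul_pinv.frobNorm_mul_one_sub_eq hA.isStarProjection_mul_pinv
      (by rw [hA.trace_mul_pinv, hB.trace_mul_pinv, hrank])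
  have hAE : (1 - B * Bp) * (A * Ap) = -((1 - B * Bp) * ((B - A) * Ap)) := by
    have hB0 : (1 - B * Bp) * B = 0 := by rw [Matrix.sub_mul, Matrix.one_mul, hB.1, sub_self]
    have hA' : (1 - B * Bp) * A = -((1 - B * Bp) * (B - A)) := by
      rw [Matrix.mul_sub, hB0, zero_sub, neg_neg]
    rw [← Matrix.mul_assoc, hA', Matrix.neg_mul, Matrix.mul_assoc]
  calc frobNorm (Bp * (1 - A * Ap)) = frobNorm (Bp * (B * Bp * (1 - A * Ap))) := by
        rw [← Matrix.mul_assoc, ← Matrix.mul_assoc, hB.2.1]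
    _ ≤ specNorm Bp * frobNorm ((1 - B * Bp) * ((B - A) * Ap)) := by
        rw [← frobNorm_neg ((1 - B * Bp) * _), ← hAE, ← hswap]
        exact frobNorm_mul_le_specNorm_mul _ _
    _ ≤ specNorm Bp * (frobNorm (B - A) * specNorm Ap) := by
        gcongr
        · exact norm_nonneg _
        · exact hB.isStarProjection_mul_pinv.one_sub.frobNorm_mul_le _ |>.trans
            (frobNorm_mul_le_mul_specNorm _ _)
    _ = specNorm Bp * frobNorm (B - A) * specNorm Ap := (mul_assoc _ _ _).symm

theorem frobNorm_pinv_sub_le (hA : IsMoorePenrose A Ap) (hB : IsMoorePenrose B Bp)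
    (hrank : A.rank = B.rank) :
    frobNorm (Bp - Ap) ≤ 3 * specNorm Bp * specNorm Ap * frobNorm (B - A) := by
  have hdecomp : Bp - Ap = -(Bp * (B - A) * Ap) + Bp * (1 - A * Ap) - (1 - Bp * B) * Ap := by
    simp only [Matrix.mul_sub, Matrix.sub_mul, Matrix.mul_one, Matrix.one_mul, Matrix.mul_assoc]
    abel
  have h1 : frobNorm (Bp * (B - A) * Ap) ≤ specNorm Bp * frobNorm (B - A) * specNorm Ap :=
    (frobNorm_mul_le_mul_specNorm _ _).trans
      (mul_le_mul_of_nonneg_right (frobNorm_mul_le_specNorm_mul _ _) (norm_nonneg _))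
  have h2 := hA.frobNorm_pinv_mul_one_sub_le hB hrank
  have h3 : frobNorm ((1 - Bp * B) * Ap) ≤ specNorm Ap * frobNorm (B - A) * specNorm Bp := by
    have h := hB.transpose.frobNorm_pinv_mul_one_sub_le hA.transpose
      (by rw [Matrix.rank_transpose, Matrix.rank_transpose, hrank])
    rwa [← Matrix.transpose_sub, frobNorm_transpose, frobNorm_sub_comm, specNorm_transpose,
      specNorm_transpose, ← Matrix.transpose_one, ← Matrix.transpose_mul, ← Matrix.transpose_sub,
      ← Matrix.transpose_mul, frobNorm_transpose] at h
  calc frobNorm (Bp - Ap)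
      ≤ frobNorm (Bp * (B - A) * Ap) + frobNorm (Bp * (1 - A * Ap))
          + frobNorm ((1 - Bp * B) * Ap) := by
        rw [hdecomp, ← frobNorm_neg (Bp * (B - A) * Ap)]
        exact (frobNorm_sub_le _ _).trans (add_le_add_left (frobNorm_add_le _ _) _)
    _ ≤ 3 * specNorm Bp * specNorm Ap * frobNorm (B - A) := by linarith only [h1, h2, h3]

end IsMoorePenrose

theorem IsCompactSVD.isMoorePenrose {p q r : ℕ} {A : Matrix (Fin p) (Fin q) ℝ}
    {U : Matrix (Fin p) (Fin r) ℝ} {S : Matrix (Fin r) (Fin r) ℝ} {W : Matrix (Fin q) (Fin r) ℝ}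
    (h : IsCompactSVD A U S W) : IsMoorePenrose A (W * S⁻¹ * Uᵀ) := by
  obtain ⟨rfl, hU, hW, hdiag, hpos⟩ := h
  have hS : IsUnit S.det := by
    rw [← Matrix.isUnit_iff_isUnit_det, ← Matrix.IsDiag.diagonal_diag hdiag, Matrix.isUnit_diagonal]
    exact Pi.isUnit_iff.2 fun i => (hpos i).ne'.isUnit
  have hAX : U * S * Wᵀ * (W * S⁻¹ * Uᵀ) = U * Uᵀ := by
    simp only [Matrix.mul_assoc, ← Matrix.mul_assoc Wᵀ W, hW, Matrix.one_mul,
      Matrix.mul_nonsing_inv_cancel_left _ _ hS]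
  have hXA : W * S⁻¹ * Uᵀ * (U * S * Wᵀ) = W * Wᵀ := by
    simp only [Matrix.mul_assoc, ← Matrix.mul_assoc Uᵀ U, hU, Matrix.one_mul,
      Matrix.nonsing_inv_mul_cancel_left _ _ hS]
  refine ⟨?_, ?_, ?_, ?_⟩
  · rw [hAX]
    simp only [Matrix.mul_assoc, ← Matrix.mul_assoc Uᵀ U, hU, Matrix.one_mul]
  · rw [hXA]
    simp only [Matrix.mul_assoc, ← Matrix.mul_assoc Wᵀ W, hW, Matrix.one_mul]
  · rw [hAX, Matrix.transpose_mul, Matrix.transpose_transpose]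
  · rw [hXA, Matrix.transpose_mul, Matrix.transpose_transpose]

/-- Wedin's pseudoinverse perturbation bound for matrices of equal
rank, and the pseudoinverse of a compact SVD. -/
theorem statement10 :
    (∀ (p q : ℕ) (A B : Matrix (Fin p) (Fin q) ℝ)
      (Ap Bp : Matrix (Fin q) (Fin p) ℝ),
      A.rank = B.rank → IsMoorePenrose A Ap → IsMoorePenrose B Bp →
      frobNorm (Bp - Ap) ≤ 3 * specNorm Bp * specNorm Ap * frobNorm (B - A)) ∧
    (∀ (p q r : ℕ) (A : Matrix (Fin p) (Fin q) ℝ)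
      (U : Matrix (Fin p) (Fin r) ℝ) (S : Matrix (Fin r) (Fin r) ℝ)
      (W : Matrix (Fin q) (Fin r) ℝ),
      IsCompactSVD A U S W → IsMoorePenrose A (W * S⁻¹ * Uᵀ)) :=
  ⟨fun _ _ _ _ _ _ hrank hA hB => hA.frobNorm_pinv_sub_le hB hrank,
    fun _ _ _ _ _ _ _ hSVD => hSVD.isMoorePenrose⟩
end

section
/- Let 𝒜 be a measurement operator satisfying the rank-(4r+1) RIP with constant δ ≤ 1, let w ∈ ℝ^{n1}, v ∈ ℝ^{n2} be unit vectors with associated virtual operator 𝒜_{(w,v)}, and set c' := max{δ, 8√(2r(n1+n2)/m)}. Let X⋆, X_t, X' ∈ ℝ^{n1×n2} all have rank r, and let X' have compact SVD X' = V'Σ'(W')ᵀ. Assume the decoupling bound |⟨𝒜(wvᵀ), 𝒜(𝒫_{wvᵀ,⊥}(X⋆ − X'))⟩| ≤ 4√((n1+n2)/m)·‖𝒜(𝒫_{wvᵀ,⊥}(X⋆ − X'))‖₂. Then ‖[(𝒜*𝒜 − 𝒜*_{(w,v)}𝒜_{(w,v)})(X⋆ − X_t)]·W'‖_F ≤ 2c'·(‖X⋆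 − X_t‖ + ‖X_t − X'‖_F) and ‖(V')ᵀ·[(𝒜*𝒜 − 𝒜*_{(w,v)}𝒜_{(w,v)})(X⋆ − X_t)]‖_F ≤ 2c'·(‖X⋆ − X_t‖ + ‖X_t − X'‖_F). -/
open Matrix MeasureTheory ProbabilityTheory
open scoped BigOperators

noncomputable section

/-- Projection onto the direction `w vᵀ` : `𝒫_{wvᵀ}(Z) = ⟨wvᵀ, Z⟩ wvᵀ`. -/
def projWV {n1 n2 : ℕ} (w : Fin n1 → ℝ) (v : Fin n2 → ℝ)
    (Z : Matrix (Fin n1) (Fin n2) ℝ) : Matrix (Fin n1) (Fin n2) ℝ :=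
  frobInner (Matrix.vecMulVec w v) Z • Matrix.vecMulVec w v

/-- `𝒫_{wvᵀ,⊥}(Z) = Z − ⟨wvᵀ, Z⟩ wvᵀ`. -/
def projWVperp {n1 n2 : ℕ} (w : Fin n1 → ℝ) (v : Fin n2 → ℝ)
    (Z : Matrix (Fin n1) (Fin n2) ℝ) : Matrix (Fin n1) (Fin n2) ℝ :=
  Z - projWV w v Z

/-- The virtual measurement operator `𝒜_{(w,v)} : ℝ^{n1×n2} → ℝ^{m+1}`. -/
def virtOp {n1 n2 m : ℕ} (A : Fin m → Matrix (Fin n1) (Fin n2) ℝ)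
    (w : Fin n1 → ℝ) (v : Fin n2 → ℝ) (Z : Matrix (Fin n1) (Fin n2) ℝ) :
    Fin (m + 1) → ℝ :=
  fun i => if h : (i : ℕ) < m then
      (Real.sqrt m)⁻¹ * frobInner (projWVperp w v (A ⟨(i : ℕ), h⟩)) Z
    else frobInner (Matrix.vecMulVec w v) Z

/-- Adjoint of the virtual measurement operator. -/
def virtAdj {n1 n2 m : ℕ} (A : Fin m → Matrix (Fin n1) (Fin n2) ℝ)
    (w : Fin n1 → ℝ) (v : Fin n2 → ℝ) (u : Fin (m + 1) → ℝ) :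
    Matrix (Fin n1) (Fin n2) ℝ :=
  (Real.sqrt m)⁻¹ • (∑ i : Fin m, u i.castSucc • projWVperp w v (A i))
    + u (Fin.last m) • Matrix.vecMulVec w v

/-- The composite operator `𝒜*_{(w,v)} 𝒜_{(w,v)}`. -/
def virtAA {n1 n2 m : ℕ} (A : Fin m → Matrix (Fin n1) (Fin n2) ℝ)
    (w : Fin n1 → ℝ) (v : Fin n2 → ℝ) (Z : Matrix (Fin n1) (Fin n2) ℝ) :
    Matrix (Fin n1) (Fin n2) ℝ :=
  virtAdj A w v (virtOp A w v Z)

end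

/-!
Write `N = w vᵀ` and `Z = X⋆ - X_t`. The virtual operator satisfies
`𝒜*_{(w,v)} 𝒜_{(w,v)} = 𝒫_⊥ 𝒜*𝒜 𝒫_⊥ + 𝒫`, so the gap `(𝒜*𝒜 - 𝒜*_{(w,v)} 𝒜_{(w,v)}) Z` equals
`⟨N, Z⟩ (𝒜*𝒜 N - N) + ⟨N, 𝒜*𝒜 𝒫_⊥ Z⟩ N`. Both projected Frobenius norms are controlled by testing
the gap against matrices `Y` of rank at most `r`: the RIP gives `|⟨𝒜*𝒜 N - N, Y⟩| ≤ δ ‖Y‖_F`, and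
`|⟨N, Z⟩| ≤ ‖Z‖`. The coefficient `⟨N, 𝒜*𝒜 𝒫_⊥ Z⟩` is split along
`𝒫_⊥ Z = 𝒫_⊥ (X⋆ - X') + 𝒫_⊥ (X' - X_t)`: the first part is handled by the decoupling bound, the
RIP upper bound and `‖X⋆ - X_t‖_F ≤ √(2r) ‖X⋆ - X_t‖`; the second part is orthogonal to `N`, so
the RIP bounds it by `δ ‖X_t - X'‖_F`.
-/

open scoped Matrix.Norms.L2Operator

section Rank

variable {R ι κ : Type*} [Field R] [Fintype κ]

theorem Matrix.rank_add_le (X Y : Matrix ι κ R) : (X + Y).rank ≤ X.rank + Y.rank := by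
  rw [Matrix.rank, Matrix.rank, Matrix.rank, Matrix.mulVecLin_add]
  exact (Submodule.finrank_mono (LinearMap.range_add_le _ _)).trans
    (Submodule.finrank_add_le_finrank_add_finrank _ _)

theorem Matrix.rank_smul_le (c : R) (X : Matrix ι κ R) : (c • X).rank ≤ X.rank := by
  rcases eq_or_ne c 0 with rfl | hc
  · simp
  · rw [rank_smul_of_mem_nonZeroDivisors X (mem_nonZeroDivisors_of_ne_zero hc)]

theorem Matrix.rank_sub_le (X Y : Matrix ι κ R) : (X - Y).rank ≤ X.rank + Y.rank := by
  rw [sub_eq_add_neg, ← neg_one_smul R Y]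
  exact (rank_add_le _ _).trans (Nat.add_le_add_left (rank_smul_le _ _) _)

end Rank

variable {n1 n2 m : ℕ}

section Frobenius

/-- Mathlib puts no inner product on matrices; the Frobenius geometry is transported from here. -/
def frobEuclidean : Matrix (Fin n1) (Fin n2) ℝ →ₗ[ℝ] EuclideanSpace ℝ (Fin n1 × Fin n2) where
  toFun X := WithLp.toLp 2 fun p => X p.1 p.2
  map_add' _ _ := rfl
  map_smul' _ _ := rfl

theorem frobEuclidean_apply (X : Matrix (Fin n1) (Fin n2) ℝ) (p : Fin n1 × Fin n2) :
    (frobEuclidean X).ofLp p = X p.1 p.2 :=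
  rfl

theorem inner_frobEuclidean (X Y : Matrix (Fin n1) (Fin n2) ℝ) :
    inner ℝ (frobEuclidean X) (frobEuclidean Y) = frobInner X Y := by
  simp only [frobEuclidean_apply, frobInner, PiLp.inner_apply,
    RCLike.inner_apply, conj_trivial, Fintype.sum_prod_type, Matrix.trace, Matrix.diag,
    Matrix.mul_apply, Matrix.transpose_apply]
  rw [Finset.sum_comm]
  simp only [mul_comm]

theorem norm_frobEuclidean (X : Matrix (Fin n1) (Fin n2) ℝ) :
    ‖frobEuclidean X‖ = frobNorm X := by
  simp [frobEuclidean_apply, frobNorm, EuclideanSpace.norm_eq, Fintype.sum_prod_type]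

theorem frobInner_comm (X Y : Matrix (Fin n1) (Fin n2) ℝ) : frobInner X Y = frobInner Y X := by
  simp only [← inner_frobEuclidean, real_inner_comm]

theorem frobInner_add_left (X Y Z : Matrix (Fin n1) (Fin n2) ℝ) :
    frobInner (X + Y) Z = frobInner X Z + frobInner Y Z := by
  simp only [← inner_frobEuclidean, map_add, inner_add_left]

theorem frobInner_add_right (X Y Z : Matrix (Fin n1) (Fin n2) ℝ) :
    frobInner X (Y + Z) = frobInner X Y + frobInner X Z := by
  simp only [← inner_frobEuclidean, map_add, inner_add_right]

theorem frobInner_sub_left (X Y Z : Matrix (Fin n1) (Fin n2) ℝ) :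
    frobInner (X - Y) Z = frobInner X Z - frobInner Y Z := by
  simp only [← inner_frobEuclidean, map_sub, inner_sub_left]

theorem frobInner_sub_right (X Y Z : Matrix (Fin n1) (Fin n2) ℝ) :
    frobInner X (Y - Z) = frobInner X Y - frobInner X Z := by
  simp only [← inner_frobEuclidean, map_sub, inner_sub_right]

theorem frobInner_smul_left (c : ℝ) (X Y : Matrix (Fin n1) (Fin n2) ℝ) :
    frobInner (c • X) Y = c * frobInner X Y := by
  simp only [← inner_frobEuclidean, map_smul, real_inner_smul_left]

theorem frobInner_smul_right (c : ℝ) (X Y : Matrix (Fin n1) (Fin n2) ℝ) :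
    frobInner X (c • Y) = c * frobInner X Y := by
  simp only [← inner_frobEuclidean, map_smul, real_inner_smul_right]

theorem frobInner_sum_right {ι : Type*} (s : Finset ι) (X : Matrix (Fin n1) (Fin n2) ℝ)
    (f : ι → Matrix (Fin n1) (Fin n2) ℝ) :
    frobInner X (∑ i ∈ s, f i) = ∑ i ∈ s, frobInner X (f i) := by
  simp only [← inner_frobEuclidean, map_sum, inner_sum]

theorem frobInner_zero_left (Y : Matrix (Fin n1) (Fin n2) ℝ) : frobInner 0 Y = 0 := by
  simp only [← inner_frobEuclidean, map_zero, inner_zero_left]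

theorem frobInner_zero_right (X : Matrix (Fin n1) (Fin n2) ℝ) : frobInner X 0 = 0 := by
  simp only [← inner_frobEuclidean, map_zero, inner_zero_right]

theorem frobNorm_nonneg_s15 (X : Matrix (Fin n1) (Fin n2) ℝ) : 0 ≤ frobNorm X :=
  Real.sqrt_nonneg _

theorem frobNorm_sq (X : Matrix (Fin n1) (Fin n2) ℝ) : frobNorm X ^ 2 = frobInner X X := by
  rw [← norm_frobEuclidean, ← inner_frobEuclidean, real_inner_self_eq_norm_sq]

theorem frobNorm_eq_zero {X : Matrix (Fin n1) (Fin n2) ℝ} : frobNorm X = 0 ↔ X = 0 := by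
  refine ⟨fun h => ?_, fun h => by simp [h, frobNorm]⟩
  rw [← norm_frobEuclidean, norm_eq_zero] at h
  ext i j
  exact congrArg (· (i, j)) h

theorem frobNorm_add_le_s15 (X Y : Matrix (Fin n1) (Fin n2) ℝ) :
    frobNorm (X + Y) ≤ frobNorm X + frobNorm Y := by
  simp only [← norm_frobEuclidean, map_add, norm_add_le]

theorem frobNorm_smul (c : ℝ) (X : Matrix (Fin n1) (Fin n2) ℝ) :
    frobNorm (c • X) = |c| * frobNorm X := by
  simp only [← norm_frobEuclidean, map_smul, norm_smul, Real.norm_eq_abs]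

theorem frobNorm_sub_comm_s15 (X Y : Matrix (Fin n1) (Fin n2) ℝ) :
    frobNorm (X - Y) = frobNorm (Y - X) := by
  simp only [← norm_frobEuclidean, map_sub, norm_sub_rev]

theorem frobNorm_add_sq (X Y : Matrix (Fin n1) (Fin n2) ℝ) :
    frobNorm (X + Y) ^ 2 = frobNorm X ^ 2 + 2 * frobInner X Y + frobNorm Y ^ 2 := by
  simp only [← norm_frobEuclidean, ← inner_frobEuclidean, map_add, norm_add_sq_real]

theorem frobNorm_sub_sq (X Y : Matrix (Fin n1) (Fin n2) ℝ) :
    frobNorm (X - Y) ^ 2 = frobNorm X ^ 2 - 2 * frobInner X Y + frobNorm Y ^ 2 := by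
  simp only [← norm_frobEuclidean, ← inner_frobEuclidean, map_sub, norm_sub_sq_real]

theorem abs_frobInner_le (X Y : Matrix (Fin n1) (Fin n2) ℝ) :
    |frobInner X Y| ≤ frobNorm X * frobNorm Y := by
  simpa only [← norm_frobEuclidean, ← inner_frobEuclidean] using abs_real_inner_le_norm _ _

theorem frobInner_transpose (X Y : Matrix (Fin n1) (Fin n2) ℝ) :
    frobInner Xᵀ Yᵀ = frobInner X Y := by
  rw [frobInner, frobInner, transpose_transpose, trace_mul_comm, ← trace_transpose, transpose_mul,
    transpose_transpose]

theorem frobNorm_transpose_s15 (X : Matrix (Fin n1) (Fin n2) ℝ) : frobNorm Xᵀ = frobNorm X := by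
  rw [frobNorm, frobNorm, Finset.sum_comm]
  rfl

theorem frobInner_mul_transpose {k : ℕ} (X : Matrix (Fin n1) (Fin n2) ℝ)
    (Y : Matrix (Fin n1) (Fin k) ℝ) (C : Matrix (Fin n2) (Fin k) ℝ) :
    frobInner X (Y * Cᵀ) = frobInner (X * C) Y := by
  rw [frobInner, frobInner, transpose_mul, ← Matrix.mul_assoc, trace_mul_comm, Matrix.mul_assoc]

theorem frobNorm_vecMulVec (w : Fin n1 → ℝ) (v : Fin n2 → ℝ) :
    frobNorm (vecMulVec w v) = vecNorm w * vecNorm v := by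
  rw [frobNorm, vecNorm, vecNorm, ← Real.sqrt_mul (by positivity), Finset.sum_mul_sum]
  simp only [vecMulVec_apply, mul_pow]

end Frobenius

section Duality

theorem frobNorm_mul_le_of_abs_frobInner_le {k : ℕ} {B : Matrix (Fin n1) (Fin n2) ℝ}
    {W : Matrix (Fin n2) (Fin k) ℝ} (hW : Wᵀ * W = 1) {c : ℝ} (hc : 0 ≤ c)
    (h : ∀ Y : Matrix (Fin n1) (Fin n2) ℝ, Y.rank ≤ k → |frobInner B Y| ≤ c * frobNorm Y) :
    frobNorm (B * W) ≤ c := by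
  have hrank : (B * W * Wᵀ).rank ≤ k :=
    (rank_mul_le_right _ _).trans ((rank_le_card_height _).trans (by simp))
  have hinner : frobInner B (B * W * Wᵀ) = frobNorm (B * W) ^ 2 := by
    rw [frobInner_mul_transpose, frobNorm_sq]
  have hnorm : frobNorm (B * W * Wᵀ) = frobNorm (B * W) := by
    rw [← sq_eq_sq₀ (frobNorm_nonneg_s15 _) (frobNorm_nonneg_s15 _), frobNorm_sq, frobNorm_sq,
      frobInner_mul_transpose, Matrix.mul_assoc, hW, Matrix.mul_one]
  have := h _ hrank
  rw [hinner, abs_of_nonneg (sq_nonneg _), hnorm] at this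
  nlinarith [frobNorm_nonneg_s15 (B * W)]

theorem frobNorm_transpose_mul_le_of_abs_frobInner_le {k : ℕ} {B : Matrix (Fin n1) (Fin n2) ℝ}
    {V : Matrix (Fin n1) (Fin k) ℝ} (hV : Vᵀ * V = 1) {c : ℝ} (hc : 0 ≤ c)
    (h : ∀ Y : Matrix (Fin n1) (Fin n2) ℝ, Y.rank ≤ k → |frobInner B Y| ≤ c * frobNorm Y) :
    frobNorm (Vᵀ * B) ≤ c := by
  rw [← frobNorm_transpose_s15, transpose_mul, transpose_transpose]
  refine frobNorm_mul_le_of_abs_frobInner_le hV hc fun Y hY => ?_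
  have := h Yᵀ (by rwa [rank_transpose])
  rwa [← frobInner_transpose, transpose_transpose, frobNorm_transpose_s15] at this

end Duality

section Spectral

theorem specNorm_nonneg (Z : Matrix (Fin n1) (Fin n2) ℝ) : 0 ≤ specNorm Z :=
  norm_nonneg _

theorem vecNorm_eq_norm (u : Fin m → ℝ) : vecNorm u = ‖WithLp.toLp 2 u‖ := by
  simp [vecNorm, EuclideanSpace.norm_eq]

theorem abs_frobInner_vecMulVec_le (w : Fin n1 → ℝ) (v : Fin n2 → ℝ)
    (Z : Matrix (Fin n1) (Fin n2) ℝ) :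
    |frobInner (vecMulVec w v) Z| ≤ vecNorm w * specNorm Z * vecNorm v := by
  have hinner : frobInner (vecMulVec w v) Z =
      inner ℝ (WithLp.toLp 2 w) (WithLp.toLp 2 (Z *ᵥ v) : EuclideanSpace ℝ (Fin n1)) := by
    simp only [← inner_frobEuclidean, PiLp.inner_apply, RCLike.inner_apply, conj_trivial,
      Fintype.sum_prod_type, frobEuclidean_apply, vecMulVec_apply, mulVec, dotProduct,
      Finset.sum_mul]
    exact Finset.sum_congr rfl fun i _ => Finset.sum_congr rfl fun j _ => by ring
  rw [hinner, vecNorm_eq_norm, vecNorm_eq_norm, mul_assoc]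
  refine (abs_real_inner_le_norm _ _).trans (mul_le_mul_of_nonneg_left ?_ (norm_nonneg _))
  exact l2_opNorm_mulVec Z (WithLp.toLp 2 v)

theorem frobNorm_sq_le_rank_mul_specNorm_sq (Z : Matrix (Fin n1) (Fin n2) ℝ) :
    frobNorm Z ^ 2 ≤ Z.rank * specNorm Z ^ 2 := by
  have hG : (Zᵀ * Z).IsHermitian := by
    simpa using isHermitian_conjTranspose_mul_self Z
  have htrace : frobNorm Z ^ 2 = ∑ i, hG.eigenvalues i := by
    rw [frobNorm_sq, frobInner, hG.trace_eq_sum_eigenvalues]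
    rfl
  have heig : ∀ i, hG.eigenvalues i ≤ specNorm Z ^ 2 := fun i => by
    have : Nonempty (Fin n2) := ⟨i⟩
    calc hG.eigenvalues i ≤ ‖Zᵀ * Z‖ :=
          (le_abs_self _).trans (spectrum.norm_le_norm_of_mem (hG.eigenvalues_mem_spectrum_real i))
      _ = specNorm Z ^ 2 := by
          rw [← conjTranspose_eq_transpose_of_trivial, l2_opNorm_conjTranspose_mul_self, sq]
          rfl
  have hcard : (Finset.univ.filter fun i => hG.eigenvalues i ≠ 0).card = Z.rank := by
    rw [← rank_transpose_mul_self Z, hG.rank_eq_card_non_zero_eigs, Fintype.card_subtype]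
  rw [htrace, ← Finset.sum_filter_ne_zero, ← hcard, ← nsmul_eq_mul]
  exact Finset.sum_le_card_nsmul _ _ _ fun i _ => heig i

theorem frobNorm_le_sqrt_mul_specNorm {k : ℕ} {Z : Matrix (Fin n1) (Fin n2) ℝ} (hZ : Z.rank ≤ k) :
    frobNorm Z ≤ √k * specNorm Z := by
  rw [← Real.sqrt_sq (frobNorm_nonneg_s15 Z), ← Real.sqrt_sq (specNorm_nonneg Z),
    ← Real.sqrt_mul (Nat.cast_nonneg _)]
  refine Real.sqrt_le_sqrt ((frobNorm_sq_le_rank_mul_specNorm_sq Z).trans ?_)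
  gcongr

end Spectral

section Measurement

variable (A : Fin m → Matrix (Fin n1) (Fin n2) ℝ)

theorem measOp_add (X Y : Matrix (Fin n1) (Fin n2) ℝ) :
    measOp A (X + Y) = measOp A X + measOp A Y := by
  ext i; simp only [measOp, frobInner_add_right, mul_add, Pi.add_apply]

theorem measOp_sub (X Y : Matrix (Fin n1) (Fin n2) ℝ) :
    measOp A (X - Y) = measOp A X - measOp A Y := by
  ext i; simp only [measOp, frobInner_sub_right, mul_sub, Pi.sub_apply]

theorem measOp_smul (c : ℝ) (X : Matrix (Fin n1) (Fin n2) ℝ) :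
    measOp A (c • X) = c • measOp A X := by
  ext i; simp only [measOp, frobInner_smul_right, Pi.smul_apply, smul_eq_mul]; ring

theorem measOp_zero : measOp A (0 : Matrix (Fin n1) (Fin n2) ℝ) = 0 := by
  simpa using measOp_smul A 0 0

theorem opAA_add (X Y : Matrix (Fin n1) (Fin n2) ℝ) :
    opAA A (X + Y) = opAA A X + opAA A Y := by
  simp only [opAA, measAdj, measOp_add, Pi.add_apply, add_smul, Finset.sum_add_distrib, smul_add]

theorem opAA_smul (c : ℝ) (X : Matrix (Fin n1) (Fin n2) ℝ) :
    opAA A (c • X) = c • opAA A X := by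
  simp only [opAA, measAdj, measOp_smul, Pi.smul_apply, smul_eq_mul, mul_smul, ← Finset.smul_sum]
  rw [smul_comm]

theorem frobInner_opAA (X Y : Matrix (Fin n1) (Fin n2) ℝ) :
    frobInner X (opAA A Y) = measOp A X ⬝ᵥ measOp A Y := by
  simp only [opAA, measAdj, frobInner_smul_right, frobInner_sum_right, dotProduct, measOp,
    Finset.mul_sum]
  exact Finset.sum_congr rfl fun i _ => by rw [frobInner_comm X]; ring

theorem vecNorm_sq (u : Fin m → ℝ) : vecNorm u ^ 2 = u ⬝ᵥ u := by
  rw [vecNorm, Real.sq_sqrt (by positivity)]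
  simp only [dotProduct, sq]

theorem vecNorm_add_sq (u u' : Fin m → ℝ) :
    vecNorm (u + u') ^ 2 = vecNorm u ^ 2 + 2 * (u ⬝ᵥ u') + vecNorm u' ^ 2 := by
  simp only [vecNorm_sq, add_dotProduct, dotProduct_add, dotProduct_comm u' u]; ring

theorem vecNorm_sub_sq (u u' : Fin m → ℝ) :
    vecNorm (u - u') ^ 2 = vecNorm u ^ 2 - 2 * (u ⬝ᵥ u') + vecNorm u' ^ 2 := by
  simp only [vecNorm_sq, sub_dotProduct, dotProduct_sub, dotProduct_comm u' u]; ring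

end Measurement

namespace HasRIP

variable {A : Fin m → Matrix (Fin n1) (Fin n2) ℝ} {k : ℕ} {δ : ℝ}

theorem vecNorm_measOp_le (hRIP : HasRIP A k δ) {X : Matrix (Fin n1) (Fin n2) ℝ}
    (hX : X.rank ≤ k) : vecNorm (measOp A X) ≤ √(1 + δ) * frobNorm X := by
  rw [← Real.sqrt_sq (frobNorm_nonneg_s15 X), ← Real.sqrt_mul' _ (sq_nonneg _)]
  exact Real.le_sqrt_of_sq_le (hRIP X hX).2

theorem abs_dotProduct_sub_frobInner_le_half (hRIP : HasRIP A k δ)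
    {X Y : Matrix (Fin n1) (Fin n2) ℝ} (hadd : (X + Y).rank ≤ k) (hsub : (X - Y).rank ≤ k) :
    |measOp A X ⬝ᵥ measOp A Y - frobInner X Y| ≤ δ / 2 * (frobNorm X ^ 2 + frobNorm Y ^ 2) := by
  obtain ⟨hl₁, hu₁⟩ := hRIP _ hadd
  obtain ⟨hl₂, hu₂⟩ := hRIP _ hsub
  rw [measOp_add, vecNorm_add_sq, frobNorm_add_sq] at hl₁ hu₁
  rw [measOp_sub, vecNorm_sub_sq, frobNorm_sub_sq] at hl₂ hu₂
  rw [abs_le]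
  constructor <;> linarith

theorem abs_dotProduct_sub_frobInner_le (hRIP : HasRIP A k δ)
    {X Y : Matrix (Fin n1) (Fin n2) ℝ} (hrank : X.rank + Y.rank ≤ k) :
    |measOp A X ⬝ᵥ measOp A Y - frobInner X Y| ≤ δ * frobNorm X * frobNorm Y := by
  rcases (mul_nonneg (frobNorm_nonneg_s15 X) (frobNorm_nonneg_s15 Y)).eq_or_lt with hab | hab
  · rcases mul_eq_zero.1 hab.symm with ha | hb
    · obtain rfl := frobNorm_eq_zero.1 ha
      simp [ha, measOp_zero, frobInner_zero_left]
    · obtain rfl := frobNorm_eq_zero.1 hb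
      simp [hb, measOp_zero, frobInner_zero_right]
  set a := frobNorm X
  set b := frobNorm Y
  have hranks (s : ℝ) : (b • X + s • a • Y).rank ≤ k :=
    (rank_add_le _ _).trans <| (add_le_add (rank_smul_le _ _)
      ((rank_smul_le _ _).trans (rank_smul_le _ _))).trans hrank
  -- polarization for `‖Y‖ • X` and `‖X‖ • Y`, which have the same norm `‖X‖ ‖Y‖`
  have := hRIP.abs_dotProduct_sub_frobInner_le_half (X := b • X) (Y := a • Y)
    (by simpa using hranks 1) (by simpa [sub_eq_add_neg] using hranks (-1))
  rw [measOp_smul, measOp_smul, smul_dotProduct, dotProduct_smul, frobInner_smul_left,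
    frobInner_smul_right, frobNorm_smul, frobNorm_smul, abs_of_nonneg (frobNorm_nonneg_s15 X),
    abs_of_nonneg (frobNorm_nonneg_s15 Y), smul_eq_mul, smul_eq_mul] at this
  have hfac : b * (a * (measOp A X ⬝ᵥ measOp A Y)) - b * (a * frobInner X Y) =
      a * b * (measOp A X ⬝ᵥ measOp A Y - frobInner X Y) := by ring
  rw [hfac, abs_mul, abs_of_pos hab] at this
  refine le_of_mul_le_mul_left ?_ hab
  linarith

theorem abs_frobInner_opAA_sub_le (hRIP : HasRIP A k δ)
    {X Y : Matrix (Fin n1) (Fin n2) ℝ} (hrank : X.rank + Y.rank ≤ k) :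
    |frobInner X (opAA A Y) - frobInner X Y| ≤ δ * frobNorm X * frobNorm Y := by
  rw [frobInner_opAA]
  exact hRIP.abs_dotProduct_sub_frobInner_le hrank

end HasRIP

section Projection

variable (w : Fin n1 → ℝ) (v : Fin n2 → ℝ)

def projWVperpLin : Matrix (Fin n1) (Fin n2) ℝ →ₗ[ℝ] Matrix (Fin n1) (Fin n2) ℝ where
  toFun := projWVperp w v
  map_add' X Y := by
    simp only [projWVperp, projWV, frobInner_add_right, add_smul]; abel
  map_smul' c X := by
    simp only [projWVperp, projWV, frobInner_smul_right, smul_sub, mul_smul, RingHom.id_apply]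

theorem projWVperp_sub (X Y : Matrix (Fin n1) (Fin n2) ℝ) :
    projWVperp w v (X - Y) = projWVperp w v X - projWVperp w v Y :=
  (projWVperpLin w v).map_sub X Y

theorem frobInner_projWVperp_comm (X Y : Matrix (Fin n1) (Fin n2) ℝ) :
    frobInner (projWVperp w v X) Y = frobInner X (projWVperp w v Y) := by
  simp only [projWVperp, projWV, frobInner_sub_left, frobInner_sub_right, frobInner_smul_left,
    frobInner_smul_right, frobInner_comm X (vecMulVec w v)]
  ring

theorem rank_projWVperp_le (X : Matrix (Fin n1) (Fin n2) ℝ) :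
    (projWVperp w v X).rank ≤ X.rank + 1 := by
  rw [projWVperp, projWV, ← smul_vecMulVec]
  exact (rank_sub_le _ _).trans (Nat.add_le_add_left (rank_vecMulVec_le _ _) _)

variable {w v}

theorem frobInner_vecMulVec_projWVperp (hN : frobNorm (vecMulVec w v) = 1)
    (X : Matrix (Fin n1) (Fin n2) ℝ) : frobInner (vecMulVec w v) (projWVperp w v X) = 0 := by
  rw [projWVperp, projWV, frobInner_sub_right, frobInner_smul_right, ← frobNorm_sq, hN]
  ring

theorem frobNorm_projWVperp_le (hN : frobNorm (vecMulVec w v) = 1)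
    (X : Matrix (Fin n1) (Fin n2) ℝ) : frobNorm (projWVperp w v X) ≤ frobNorm X := by
  have hpyth : frobNorm X ^ 2 = frobNorm (projWVperp w v X) ^ 2 +
      frobInner (vecMulVec w v) X ^ 2 := by
    have hX : X = projWVperp w v X + frobInner (vecMulVec w v) X • vecMulVec w v :=
      (sub_add_cancel _ _).symm
    conv_lhs => rw [hX]
    rw [frobNorm_add_sq, frobInner_smul_right, frobInner_comm (projWVperp w v X),
      frobInner_vecMulVec_projWVperp hN, frobNorm_smul, hN, mul_one, sq_abs]
    ring
  nlinarith [frobNorm_nonneg_s15 X, frobNorm_nonneg_s15 (projWVperp w v X),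
    sq_nonneg (frobInner (vecMulVec w v) X)]

end Projection

section VirtualOperator

variable (A : Fin m → Matrix (Fin n1) (Fin n2) ℝ) (w : Fin n1 → ℝ) (v : Fin n2 → ℝ)
  (Z : Matrix (Fin n1) (Fin n2) ℝ)

theorem virtOp_castSucc (i : Fin m) :
    virtOp A w v Z i.castSucc = measOp A (projWVperp w v Z) i := by
  simp only [virtOp, Fin.val_castSucc, i.isLt, dif_pos, Fin.eta, measOp,
    frobInner_projWVperp_comm]

theorem virtOp_last : virtOp A w v Z (Fin.last m) = frobInner (vecMulVec w v) Z := by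
  simp [virtOp]

theorem virtAA_eq :
    virtAA A w v Z = projWVperp w v (opAA A (projWVperp w v Z)) + projWV w v Z := by
  simp only [virtAA, virtAdj, virtOp_last, virtOp_castSucc, opAA, measAdj]
  congr 1
  change _ = projWVperpLin w v _
  simp only [map_smul, map_sum]
  rfl

theorem opAA_sub_virtAA :
    opAA A Z - virtAA A w v Z =
      frobInner (vecMulVec w v) Z • (opAA A (vecMulVec w v) - vecMulVec w v) +
        frobInner (vecMulVec w v) (opAA A (projWVperp w v Z)) • vecMulVec w v := by
  have hop : opAA A Z = opAA A (projWVperp w v Z) +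
      frobInner (vecMulVec w v) Z • opAA A (vecMulVec w v) := by
    rw [← opAA_smul, ← opAA_add, projWVperp, projWV, sub_add_cancel]
  rw [virtAA_eq, hop]
  simp only [projWVperp, projWV]
  module

end VirtualOperator

section Gap

variable {A : Fin m → Matrix (Fin n1) (Fin n2) ℝ} {k : ℕ} {δ : ℝ} {w : Fin n1 → ℝ}
  {v : Fin n2 → ℝ}

theorem abs_frobInner_opAA_sub_virtAA_le (hRIP : HasRIP A k δ)
    (hN : frobNorm (vecMulVec w v) = 1) (Z : Matrix (Fin n1) (Fin n2) ℝ)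
    {Y : Matrix (Fin n1) (Fin n2) ℝ} (hY : Y.rank + 1 ≤ k) :
    |frobInner (opAA A Z - virtAA A w v Z) Y| ≤
      (δ * |frobInner (vecMulVec w v) Z| +
        |frobInner (vecMulVec w v) (opAA A (projWVperp w v Z))|) * frobNorm Y := by
  have hrank : Y.rank + (vecMulVec w v).rank ≤ k :=
    (Nat.add_le_add_left (rank_vecMulVec_le w v) _).trans hY
  have herr : |frobInner (opAA A (vecMulVec w v) - vecMulVec w v) Y| ≤ δ * frobNorm Y := by
    have := hRIP.abs_frobInner_opAA_sub_le hrank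
    rwa [hN, mul_one, frobInner_comm Y, frobInner_comm Y, ← frobInner_sub_left] at this
  have hunit : |frobInner (vecMulVec w v) Y| ≤ frobNorm Y := by
    simpa [hN] using abs_frobInner_le (vecMulVec w v) Y
  rw [opAA_sub_virtAA, frobInner_add_left, frobInner_smul_left, frobInner_smul_left]
  refine (abs_add_le _ _).trans ?_
  rw [abs_mul, abs_mul]
  calc _ ≤ |frobInner (vecMulVec w v) Z| * (δ * frobNorm Y) +
        |frobInner (vecMulVec w v) (opAA A (projWVperp w v Z))| * frobNorm Y := by
        gcongr
    _ = _ := by ring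

theorem abs_frobInner_vecMulVec_opAA_projWVperp_le (hRIP : HasRIP A k δ) (hδ : 0 ≤ δ)
    (hN : frobNorm (vecMulVec w v) = 1) {r : ℕ} {Xstar Xt X' : Matrix (Fin n1) (Fin n2) ℝ}
    (hXstar : Xstar.rank ≤ r) (hXt : Xt.rank ≤ r) (hX' : X'.rank ≤ r) (hk : 2 * r + 2 ≤ k)
    {t : ℝ} (ht : 0 ≤ t)
    (hdec : |frobInner (vecMulVec w v) (opAA A (projWVperp w v (Xstar - X')))| ≤
      t * vecNorm (measOp A (projWVperp w v (Xstar - X')))) :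
    |frobInner (vecMulVec w v) (opAA A (projWVperp w v (Xstar - Xt)))| ≤
      t * √(1 + δ) * (√(2 * r) * specNorm (Xstar - Xt) + frobNorm (Xt - X')) +
        δ * frobNorm (Xt - X') := by
  have hsplit : projWVperp w v (Xstar - Xt) =
      projWVperp w v (Xstar - X') + projWVperp w v (X' - Xt) := by
    simp only [projWVperp_sub]; abel
  have hfar : frobNorm (projWVperp w v (Xstar - X')) ≤
      √(2 * r) * specNorm (Xstar - Xt) + frobNorm (Xt - X') := calc
    _ ≤ frobNorm (Xstar - Xt + (Xt - X')) := by
        rw [sub_add_sub_cancel]; exact frobNorm_projWVperp_le hN _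
    _ ≤ _ := (frobNorm_add_le_s15 _ _).trans <| add_le_add_left
        (by exact_mod_cast frobNorm_le_sqrt_mul_specNorm ((rank_sub_le _ _).trans
          (add_le_add hXstar hXt) |>.trans (two_mul r).ge)) _
  have hβfar := hdec.trans <| mul_le_mul_of_nonneg_left (hRIP.vecNorm_measOp_le <|
    (rank_projWVperp_le w v _).trans <| by linarith [rank_sub_le Xstar X']) ht
  have hβnear := hRIP.abs_frobInner_opAA_sub_le (X := vecMulVec w v)
    (Y := projWVperp w v (X' - Xt)) <| by
      linarith [rank_vecMulVec_le w v, rank_projWVperp_le w v (X' - Xt), rank_sub_le X' Xt]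
  rw [frobInner_vecMulVec_projWVperp hN, sub_zero, hN, mul_one] at hβnear
  rw [hsplit, opAA_add, frobInner_add_right]
  refine (abs_add_le _ _).trans (add_le_add ?_ (hβnear.trans ?_))
  · refine hβfar.trans ?_
    rw [mul_assoc]
    gcongr
  · rw [frobNorm_sub_comm_s15 Xt]; exact mul_le_mul_of_nonneg_left (frobNorm_projWVperp_le hN _) hδ

theorem abs_frobInner_opAA_sub_virtAA_le_of_decoupling (hRIP : HasRIP A k δ) (hδ : 0 ≤ δ)
    (hN : frobNorm (vecMulVec w v) = 1) {r : ℕ} {Xstar Xt X' : Matrix (Fin n1) (Fin n2) ℝ}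
    (hXstar : Xstar.rank ≤ r) (hXt : Xt.rank ≤ r) (hX' : X'.rank ≤ r) (hk : 2 * r + 2 ≤ k)
    {t : ℝ} (ht : 0 ≤ t)
    (hdec : |frobInner (vecMulVec w v) (opAA A (projWVperp w v (Xstar - X')))| ≤
      t * vecNorm (measOp A (projWVperp w v (Xstar - X'))))
    {Y : Matrix (Fin n1) (Fin n2) ℝ} (hY : Y.rank ≤ r) :
    |frobInner (opAA A (Xstar - Xt) - virtAA A w v (Xstar - Xt)) Y| ≤
      (δ * specNorm (Xstar - Xt) +
        (t * √(1 + δ) * (√(2 * r) * specNorm (Xstar - Xt) + frobNorm (Xt - X')) +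
          δ * frobNorm (Xt - X'))) * frobNorm Y := by
  have hα : |frobInner (vecMulVec w v) (Xstar - Xt)| ≤ specNorm (Xstar - Xt) := by
    have := abs_frobInner_vecMulVec_le w v (Xstar - Xt)
    rwa [mul_right_comm, ← frobNorm_vecMulVec, hN, one_mul] at this
  refine (abs_frobInner_opAA_sub_virtAA_le hRIP hN _ (by omega)).trans
    (mul_le_mul_of_nonneg_right (add_le_add (mul_le_mul_of_nonneg_left hα hδ) ?_)
      (frobNorm_nonneg_s15 Y))
  exact abs_frobInner_vecMulVec_opAA_projWVperp_le hRIP hδ hN hXstar hXt hX' hk ht hdec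

end Gap

/-- Difference of the true and virtual composite operators applied to
`X⋆ − X_t`, projected onto the singular subspaces of `X'`. -/
theorem statement15 {n1 n2 m r : ℕ}
    (A : Fin m → Matrix (Fin n1) (Fin n2) ℝ) (δ c' : ℝ)
    (hδ0 : 0 < δ) (hδ1 : δ ≤ 1) (hRIP : HasRIP A (4 * r + 1) δ)
    (w : Fin n1 → ℝ) (v : Fin n2 → ℝ) (hw : vecNorm w = 1) (hv : vecNorm v = 1)
    (hc' : c' = max δ (8 * Real.sqrt (2 * (r : ℝ) * ((n1 : ℝ) + n2) / m)))
    (Xstar Xt X' : Matrix (Fin n1) (Fin n2) ℝ)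
    (hXstar : Xstar.rank = r) (hXt : Xt.rank = r)
    (V' : Matrix (Fin n1) (Fin r) ℝ) (S' : Matrix (Fin r) (Fin r) ℝ)
    (W' : Matrix (Fin n2) (Fin r) ℝ) (hX' : IsCompactSVD X' V' S' W')
    (hdec : |frobInner (Matrix.vecMulVec w v)
        (opAA A (projWVperp w v (Xstar - X')))| ≤
      4 * Real.sqrt (((n1 : ℝ) + n2) / m) *
        vecNorm (measOp A (projWVperp w v (Xstar - X')))) :
    frobNorm ((opAA A (Xstar - Xt) - virtAA A w v (Xstar - Xt)) * W') ≤
      2 * c' * (specNorm (Xstar - Xt) + frobNorm (Xt - X')) ∧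
    frobNorm (V'ᵀ * (opAA A (Xstar - Xt) - virtAA A w v (Xstar - Xt))) ≤
      2 * c' * (specNorm (Xstar - Xt) + frobNorm (Xt - X')) := by
  set σ := specNorm (Xstar - Xt)
  set F := frobNorm (Xt - X')
  have hσ : 0 ≤ σ := specNorm_nonneg _
  have hF : 0 ≤ F := frobNorm_nonneg_s15 _
  have hc'δ : δ ≤ c' := hc' ▸ le_max_left _ _
  have hbound : 0 ≤ 2 * c' * (σ + F) := by have := hδ0.le.trans hc'δ; positivity
  obtain rfl | hr := Nat.eq_zero_or_pos r
  · -- `V'` and `W'` have no columns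
    simpa [frobNorm] using And.intro hbound hbound
  obtain ⟨hX'eq, hV', hW', -, -⟩ := hX'
  have hX'rank : X'.rank ≤ r := hX'eq ▸ (rank_mul_le_left _ _).trans
    ((rank_mul_le_left _ _).trans ((rank_le_card_width _).trans (by simp)))
  have hN : frobNorm (vecMulVec w v) = 1 := by rw [frobNorm_vecMulVec, hw, hv, one_mul]
  have hsqrt : √(1 + δ) ≤ 2 := Real.sqrt_le_iff.2 ⟨by norm_num, by linarith⟩
  set t := √(((n1 : ℝ) + n2) / m)
  have hc't : 8 * √(2 * r) * t ≤ c' := by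
    rw [hc', mul_assoc, ← Real.sqrt_mul (by positivity), mul_div_assoc]
    exact le_max_right _ _
  have hc't' : 8 * t ≤ c' := hc't.trans' <| by
    have : (1 : ℝ) ≤ √(2 * r) := Real.one_le_sqrt.2 (by norm_cast; omega)
    nlinarith [Real.sqrt_nonneg (((n1 : ℝ) + n2) / m)]
  have hD (Y : Matrix (Fin n1) (Fin n2) ℝ) (hY : Y.rank ≤ r) :
      |frobInner (opAA A (Xstar - Xt) - virtAA A w v (Xstar - Xt)) Y| ≤
        2 * c' * (σ + F) * frobNorm Y := by
    refine (abs_frobInner_opAA_sub_virtAA_le_of_decoupling hRIP hδ0.le hN hXstar.le hXt.le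
      hX'rank (by omega) (by positivity) hdec hY).trans
      (mul_le_mul_of_nonneg_right ?_ (frobNorm_nonneg_s15 Y))
    calc _ ≤ δ * σ + (4 * t * 2 * (√(2 * r) * σ + F) + δ * F) := by gcongr
      _ = δ * σ + 8 * √(2 * r) * t * σ + 8 * t * F + δ * F := by ring
      _ ≤ c' * σ + c' * σ + c' * F + c' * F := by gcongr
      _ = 2 * c' * (σ + F) := by ring
  exact ⟨frobNorm_mul_le_of_abs_frobInner_le hW' hbound hD,
    frobNorm_transpose_mul_le_of_abs_frobInner_le hV' hbound hD⟩
end
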